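/- arXiv:1901.09259 — 3 statements merged into one kernel-verified Lean document; each statement's English description precedes it below -/
import Mathlib

section
/- Under the setup, the set F := {p ∈ ℝ² : p·q ≤ γ°(q) for every q ∈ ℝ² with |q| = 1} equals the set {p ∈ ℝ² : n_j·p ≤ 1 for all j = 0,…,N−1}; that is, the region bounded by the support function γ° is exactly the polygon determined by the constructed vectors n_j. -/
/-!
Since `ψ j - ψ (j - 1) ∈ (0, π)`, the vector `n j` is the point where the lines `m (j - 1) · x = 1`
and `m j · x = 1` meet. The `m k` wind around the origin with gaps below `π`, so `γ° ≥ 0`; with (γ3)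
this forces `m (j + 1) · n j < 1`, hence `n j` lies in `{x | m k · x ≤ 1 for all k}` and the
vertices `n j` turn counterclockwise. Now `p ∈ F` gives `n j · p ≤ γ°(n j) ≤ 1` by homogeneity of
`γ°`. Conversely, if `γ°(q) = m j · q` then `m j` beats its neighbours on `q`, which makes `q` a
nonnegative combination `α n j + β n (j + 1)` with `α + β = m j · q`, so `p · q ≤ γ°(q)` whenever
`n j · p ≤ 1` and `n (j + 1) · p ≤ 1`.
-/

open Real

def dot (p q : ℝ × ℝ) : ℝ := p.1 * q.1 + p.2 * q.2

open Finset

def cross (p q : ℝ × ℝ) : ℝ := p.1 * q.2 - p.2 * q.1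

def rot90 (p : ℝ × ℝ) : ℝ × ℝ := (-p.2, p.1)

noncomputable def polar (ρ φ : ℝ) : ℝ × ℝ := (ρ * cos φ, ρ * sin φ)

/-- The intersection of the lines `v · x = 1` and `w · x = 1` (Cramer's rule);
it is `0` when `v` and `w` are parallel. -/
noncomputable def vertex (v w : ℝ × ℝ) : ℝ × ℝ := (cross v w)⁻¹ • rot90 (v - w)

lemma dot_comm (p q : ℝ × ℝ) : dot p q = dot q p := by
  simp only [dot]; ring

lemma dot_neg_right (p q : ℝ × ℝ) : dot p (-q) = -dot p q := by
  simp only [dot, Prod.fst_neg, Prod.snd_neg]; ring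

lemma dot_smul_right (p q : ℝ × ℝ) (t : ℝ) : dot p (t • q) = t * dot p q := by
  simp only [dot, Prod.smul_fst, Prod.smul_snd, smul_eq_mul]; ring

lemma dot_sub_left (p q x : ℝ × ℝ) : dot (p - q) x = dot p x - dot q x := by
  simp only [dot, Prod.fst_sub, Prod.snd_sub]; ring

lemma dot_rot90 (p q : ℝ × ℝ) : dot p (rot90 q) = cross q p := by
  simp only [dot, rot90, cross]; ring

lemma dot_polar_polar (ρ φ σ χ : ℝ) :
    dot (polar ρ φ) (polar σ χ) = ρ * σ * cos (χ - φ) := by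
  simp only [dot, polar, cos_sub]; ring

lemma cross_polar_polar (ρ φ σ χ : ℝ) :
    cross (polar ρ φ) (polar σ χ) = ρ * σ * sin (χ - φ) := by
  simp only [cross, polar, sin_sub]; ring

lemma dot_vertex_left {v w : ℝ × ℝ} (h : cross v w ≠ 0) : dot v (vertex v w) = 1 := by
  rw [vertex, dot_smul_right, dot_rot90]
  field_simp
  simp only [cross, Prod.fst_sub, Prod.snd_sub]; ring

lemma dot_vertex_right {v w : ℝ × ℝ} (h : cross v w ≠ 0) : dot w (vertex v w) = 1 := by
  rw [vertex, dot_smul_right, dot_rot90]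
  field_simp
  simp only [cross, Prod.fst_sub, Prod.snd_sub]; ring

lemma cross_vertex (q v w : ℝ × ℝ) : cross q (vertex v w) = dot (v - w) q / cross v w := by
  simp only [vertex, cross, rot90, dot, Prod.smul_fst, Prod.smul_snd, smul_eq_mul,
    Prod.fst_sub, Prod.snd_sub]
  ring

lemma cross_vertex_vertex {u v w : ℝ × ℝ} (h : cross u v ≠ 0) :
    cross (vertex u v) (vertex v w) = (1 - dot w (vertex u v)) / cross v w := by
  rw [cross_vertex, dot_sub_left, dot_vertex_right h]

-- Writing `q` in the basis `v, w` by Cramer's rule gives nonnegative coefficients.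
lemma dot_le_dot_of_cross {m p q v w : ℝ × ℝ} (hvw : 0 < cross v w) (hqv : cross q v ≤ 0)
    (hqw : 0 ≤ cross q w) (hmv : dot m v = 1) (hmw : dot m w = 1) (hpv : dot v p ≤ 1)
    (hpw : dot w p ≤ 1) : dot p q ≤ dot m q := by
  have hcramer : ∀ x, cross v w * dot x q = cross q w * dot x v - cross q v * dot x w := by
    intro x; simp only [cross, dot]; ring
  rw [dot_comm] at hpv hpw
  refine le_of_mul_le_mul_left ?_ hvw
  rw [hcramer, hcramer, hmv, hmw]
  linarith [mul_le_mul_of_nonneg_left hpv hqw, mul_le_mul_of_nonneg_left hpw (neg_nonneg.mpr hqv)]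

lemma dot_le_of_forall_unit {g : ℝ × ℝ → ℝ} (hg : ∀ t : ℝ, 0 < t → ∀ q, g (t • q) = t * g q)
    {p : ℝ × ℝ} (hp : ∀ q : ℝ × ℝ, q.1 ^ 2 + q.2 ^ 2 = 1 → dot p q ≤ g q) {q : ℝ × ℝ}
    (hq : q ≠ 0) : dot p q ≤ g q := by
  have hnorm : 0 < q.1 ^ 2 + q.2 ^ 2 := by
    rcases q with ⟨x, y⟩
    rcases not_and_or.mp (Prod.mk_eq_zero.not.mp hq) with h | h <;> positivity
  set t := √(q.1 ^ 2 + q.2 ^ 2)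
  have ht : 0 < t := Real.sqrt_pos.mpr hnorm
  have hunit : (t⁻¹ • q).1 ^ 2 + (t⁻¹ • q).2 ^ 2 = 1 := by
    have ht2 : t ^ 2 = q.1 ^ 2 + q.2 ^ 2 := sq_sqrt hnorm.le
    simp only [Prod.smul_fst, Prod.smul_snd, smul_eq_mul]
    field_simp
    linarith
  have hq' : q = t • t⁻¹ • q := by rw [smul_inv_smul₀ ht.ne']
  rw [hq', dot_smul_right, hg t ht]
  exact mul_le_mul_of_nonneg_left (hp _ hunit) ht.le

lemma Function.Periodic.exists_natCast_mem_range {α : Type*} {f : ℤ → α} {N : ℕ}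
    (h : Function.Periodic f N) (hN : 0 < N) (k : ℤ) : ∃ i ∈ range N, f i = f k := by
  obtain ⟨y, hy, hfy⟩ := h.exists_mem_Ico₀ (by exact_mod_cast hN) k
  obtain ⟨hy0, hyN⟩ := hy
  refine ⟨y.toNat, mem_range.mpr (by omega), ?_⟩
  rw [Int.toNat_of_nonneg hy0, hfy]

lemma Monotone.exists_le_lt_succ {α : Type*} [LinearOrder α] {f : ℤ → α} (hf : Monotone f)
    {x : α} (hlo : ∃ i, f i ≤ x) (hhi : ∃ i, x < f i) : ∃ i, f i ≤ x ∧ x < f (i + 1) := by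
  obtain ⟨b, hb⟩ := hhi
  obtain ⟨i, hi, hgreatest⟩ := Int.exists_greatest_of_bdd
    ⟨b, fun z hz => le_of_lt (hf.reflect_lt (lt_of_le_of_lt hz hb))⟩ hlo
  exact ⟨i, hi, lt_of_not_ge fun h => by have := hgreatest _ h; omega⟩

section PolarDuality

/-- Condition (γ3) on the maximality regions `P_j`. -/
def MaxDeterminedByNeighbours (N : ℕ) (m : ℤ → ℝ × ℝ) : Prop :=
  ∀ j : ℤ, {p : ℝ × ℝ | ∀ k ∈ range N, dot (m (k : ℤ)) p ≤ dot (m j) p}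
    = {p : ℝ × ℝ | dot (m (j - 1)) p ≤ dot (m j) p ∧ dot (m (j + 1)) p ≤ dot (m j) p}

variable {N : ℕ} {m : ℤ → ℝ × ℝ}

lemma dot_succ_vertex_lt_one (hN : 0 < N) (hper : Function.Periodic m N)
    (hpos : ∀ q, ∃ k, 0 ≤ dot (m k) q)
    (hloc : MaxDeterminedByNeighbours N m)
    {j : ℤ} (hturn : 0 < cross (m (j - 1)) (m j)) :
    dot (m (j + 1)) (vertex (m (j - 1)) (m j)) < 1 := by
  have hx₁ := dot_vertex_left hturn.ne'
  have hx₂ := dot_vertex_right hturn.ne'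
  -- Otherwise `-vertex` beats both neighbours of `m j`, so every `m k · (-vertex)` is `≤ -1`,
  -- contradicting `hpos`.
  by_contra! h
  have hx : ∀ k ∈ range N, dot (m k) (-vertex (m (j - 1)) (m j)) ≤ -1 := by
    have hmem := (Set.ext_iff.mp (hloc j) (-vertex (m (j - 1)) (m j))).mpr
      ⟨by rw [dot_neg_right, dot_neg_right, hx₁, hx₂],
        by rw [dot_neg_right, dot_neg_right, hx₂]; exact neg_le_neg h⟩
    intro k hk
    simpa only [dot_neg_right, hx₂] using hmem k hk
  obtain ⟨k, hk⟩ := hpos (-vertex (m (j - 1)) (m j))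
  obtain ⟨i, hi, hik⟩ := hper.exists_natCast_mem_range hN k
  linarith [hik ▸ hx i hi]

lemma dot_vertex_le_one (hN : 0 < N) (hper : Function.Periodic m N)
    (hpos : ∀ q, ∃ k, 0 ≤ dot (m k) q)
    (hloc : MaxDeterminedByNeighbours N m)
    {j : ℤ} (hturn : 0 < cross (m (j - 1)) (m j)) :
    ∀ k ∈ range N, dot (m k) (vertex (m (j - 1)) (m j)) ≤ 1 := by
  have hx₂ := dot_vertex_right hturn.ne'
  have hx := (Set.ext_iff.mp (hloc j) (vertex (m (j - 1)) (m j))).mpr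
    ⟨((dot_vertex_left hturn.ne').trans hx₂.symm).le,
      hx₂ ▸ (dot_succ_vertex_lt_one hN hper hpos hloc hturn).le⟩
  exact fun k hk => (hx k hk).trans_eq hx₂

lemma dot_le_dot_of_neighbours_le (hN : 0 < N) (hper : Function.Periodic m N)
    (hpos : ∀ q, ∃ k, 0 ≤ dot (m k) q)
    (hloc : MaxDeterminedByNeighbours N m)
    (hturn : ∀ j, 0 < cross (m (j - 1)) (m j)) {j : ℤ} {p q : ℝ × ℝ}
    (hprev : dot (m (j - 1)) q ≤ dot (m j) q) (hnext : dot (m (j + 1)) q ≤ dot (m j) q)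
    (hp : ∀ i, dot (vertex (m (i - 1)) (m i)) p ≤ 1) : dot p q ≤ dot (m j) q := by
  have hturn' : 0 < cross (m j) (m (j + 1)) := by simpa using hturn (j + 1)
  apply dot_le_dot_of_cross (v := vertex (m (j - 1)) (m j)) (w := vertex (m j) (m (j + 1)))
  · rw [cross_vertex_vertex (hturn j).ne']
    exact div_pos (sub_pos.mpr (dot_succ_vertex_lt_one hN hper hpos hloc (hturn j))) hturn'
  · rw [cross_vertex, dot_sub_left]
    exact div_nonpos_of_nonpos_of_nonneg (sub_nonpos.mpr hprev) (hturn j).le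
  · rw [cross_vertex, dot_sub_left]
    exact div_nonneg (sub_nonneg.mpr hnext) hturn'.le
  · exact dot_vertex_right (hturn j).ne'
  · exact dot_vertex_left hturn'.ne'
  · exact hp j
  · simpa using hp (j + 1)

theorem frankSet_eq_polygon_of_cross_pos (hN : (range N).Nonempty)
    (hper : Function.Periodic m N) (hpos : ∀ q, ∃ k, 0 ≤ dot (m k) q)
    (hloc : MaxDeterminedByNeighbours N m)
    (hturn : ∀ j, 0 < cross (m (j - 1)) (m j)) :
    {p : ℝ × ℝ | ∀ q : ℝ × ℝ, q.1 ^ 2 + q.2 ^ 2 = 1 →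
        dot p q ≤ (range N).sup' hN fun k => dot (m (k : ℤ)) q}
      = {p : ℝ × ℝ | ∀ j ∈ range N, dot (vertex (m ((j : ℤ) - 1)) (m j)) p ≤ 1} := by
  have hN' : 0 < N := Nat.pos_of_ne_zero (nonempty_range_iff.mp hN)
  ext p
  constructor
  · intro hp j _
    have hvertex_ne : vertex (m ((j : ℤ) - 1)) (m j) ≠ 0 := fun h => by
      simpa [h, dot] using dot_vertex_left (hturn j).ne'
    rw [dot_comm]
    refine (dot_le_of_forall_unit (fun t ht q => ?_) hp hvertex_ne).trans
      (sup'_le _ _ (dot_vertex_le_one hN' hper hpos hloc (hturn j)))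
    simp only [dot_smul_right]
    exact (mul₀_sup' ht.le _ _ _).symm
  · intro hp q _
    obtain ⟨j, hj, hjq⟩ := exists_mem_eq_sup' hN fun k => dot (m (k : ℤ)) q
    have hmax : ∀ k ∈ range N, dot (m k) q ≤ dot (m j) q :=
      fun k hk => hjq ▸ le_sup' (fun k : ℕ => dot (m k) q) hk
    obtain ⟨hprev, hnext⟩ := (Set.ext_iff.mp (hloc j) q).mp hmax
    have hvertex_per : Function.Periodic (fun i : ℤ => vertex (m (i - 1)) (m i)) N :=
      fun i => by dsimp only; rw [add_sub_right_comm, hper, hper]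
    rw [hjq]
    refine dot_le_dot_of_neighbours_le hN' hper hpos hloc hturn hprev hnext fun i => ?_
    obtain ⟨k, hk, hki⟩ := hvertex_per.exists_natCast_mem_range hN' i
    exact hki ▸ hp k hk

end PolarDuality

section Angles

variable {N : ℕ} {ψ : ℤ → ℝ}

-- Reduce `φ` into `[ψ 0, ψ N)`; there it lies between consecutive angles `ψ i ≤ φ < ψ (i + 1)`,
-- which are less than `π` apart, so it is within `π / 2` of one of them.
lemma exists_cos_sub_pos (hper : ∀ j, ψ (j + N) = ψ j + 2 * π)
    (hmono : ∀ j, ψ j < ψ (j + 1)) (hgap : ∀ j, ψ (j + 1) < ψ j + π) (φ : ℝ) :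
    ∃ k, 0 < cos (φ - ψ k) := by
  set φ₀ := toIcoMod two_pi_pos (ψ 0) φ
  have hcos : ∀ x, cos (φ - x) = cos (φ₀ - x) := fun x => by
    have hφ : φ - x = φ₀ - x + toIcoDiv two_pi_pos (ψ 0) φ * (2 * π) := by
      linarith [self_sub_toIcoMod_eq_mul two_pi_pos (ψ 0) φ]
    rw [hφ, cos_add_int_mul_two_pi]
  obtain ⟨hlo, hhi⟩ := toIcoMod_mem_Ico two_pi_pos (ψ 0) φ
  have hψN : ψ N = ψ 0 + 2 * π := by simpa using hper 0
  rw [← hψN] at hhi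
  obtain ⟨i, hi, hi'⟩ := (strictMono_int_of_lt_succ hmono).monotone.exists_le_lt_succ
    ⟨0, hlo⟩ ⟨N, hhi⟩
  have := hgap i
  by_cases h : φ₀ - ψ i < π / 2
  · exact ⟨i, hcos _ ▸ cos_pos_of_mem_Ioo ⟨by linarith [pi_pos], h⟩⟩
  · exact ⟨i + 1, hcos _ ▸ cos_pos_of_mem_Ioo ⟨by linarith, by linarith [pi_pos]⟩⟩

lemma exists_dot_polar_nonneg {η : ℤ → ℝ} (hη : ∀ j, 0 < η j)
    (hper : ∀ j, ψ (j + N) = ψ j + 2 * π) (hmono : ∀ j, ψ j < ψ (j + 1))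
    (hgap : ∀ j, ψ (j + 1) < ψ j + π) (q : ℝ × ℝ) :
    ∃ k, 0 ≤ dot (polar (η k) (ψ k)) q := by
  set z : ℂ := ⟨q.1, q.2⟩
  have hq : q = polar ‖z‖ (Complex.arg z) := by
    rw [polar, Complex.norm_mul_cos_arg, Complex.norm_mul_sin_arg]
  obtain ⟨k, hk⟩ := exists_cos_sub_pos hper hmono hgap (Complex.arg z)
  refine ⟨k, ?_⟩
  rw [hq, dot_polar_polar]
  exact mul_nonneg (mul_nonneg (hη k).le (norm_nonneg z)) hk.le

end Angles

lemma polar_eq_vertex {v w : ℝ × ℝ} {c θ r : ℝ}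
    (hc : cos c = (w - v).1 / √((w - v).1 ^ 2 + (w - v).2 ^ 2) ∧
      sin c = (w - v).2 / √((w - v).1 ^ 2 + (w - v).2 ^ 2))
    (hθ : θ = c + π / 2) (hr : r = (dot w (polar 1 θ))⁻¹) :
    polar r θ = vertex v w := by
  set R := √((w - v).1 ^ 2 + (w - v).2 ^ 2)
  have hR : R ≠ 0 := fun h => by
    have := sin_sq_add_cos_sq c
    rw [hc.1, hc.2, h] at this
    norm_num at this
  have hu : polar 1 θ = R⁻¹ • rot90 (w - v) := by
    rw [polar, hθ, cos_add_pi_div_two, sin_add_pi_div_two, hc.1, hc.2]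
    ext <;> simp only [rot90, Prod.smul_fst, Prod.smul_snd, smul_eq_mul] <;> ring
  have hpolar : polar r θ = r • polar 1 θ := by
    ext <;> simp only [polar, Prod.smul_fst, Prod.smul_snd, smul_eq_mul] <;> ring
  have hcross : cross (w - v) w = -cross v w := by
    simp only [cross, Prod.fst_sub, Prod.snd_sub]; ring
  have hrot : rot90 (w - v) = -rot90 (v - w) := by
    ext <;> simp only [rot90, Prod.fst_sub, Prod.snd_sub, Prod.fst_neg, Prod.snd_neg] <;> ring
  have hcoef : (R⁻¹ * -cross v w)⁻¹ * R⁻¹ = -(cross v w)⁻¹ := by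
    rw [mul_inv, inv_inv, inv_neg, mul_neg, neg_mul, mul_right_comm, mul_inv_cancel₀ hR, one_mul]
  rw [hpolar, hr, hu, dot_smul_right, dot_rot90, hcross, smul_smul, hcoef, hrot, vertex,
    neg_smul, smul_neg, neg_neg]

/-- Reconstruction of the crystalline energy density from the support function:
under the assumptions (γ1)–(γ3) on the data `m_j = η_j (cos ψ_j, sin ψ_j)` of
`γ°(p) = max_j m_j · p`, the Frank set
`F = {p : p · q ≤ γ°(q) for every unit vector q}` is exactly the polygon
`{p : n_j · p ≤ 1 for all j}` determined by the constructed vectors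
`n_j = r_j (cos θ_j, sin θ_j)`. -/
theorem frank_set_eq_polygon
    (N : ℕ) (hN : 3 ≤ N)
    (η ψ : ℤ → ℝ)
    (hηpos : ∀ j, 0 < η j)
    (hηper : ∀ j, η (j + N) = η j)
    (hψper : ∀ j, ψ (j + N) = ψ j + 2 * π)
    (hψmono : ∀ j, ψ j < ψ (j + 1))
    (hψgap : ∀ j, ψ (j + 1) < ψ j + π)
    (m : ℤ → ℝ × ℝ)
    (hm : ∀ j, m j = (η j * cos (ψ j), η j * sin (ψ j)))
    (γpol : ℝ × ℝ → ℝ)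
    (hγpol : ∀ p, γpol p = (Finset.range N).sup'
      (Finset.nonempty_range_iff.mpr (by omega)) (fun j => dot (m (j : ℤ)) p))
    -- (γ3): each maximality region is cut out by the two neighbouring
    -- constraints.
    (hγ3a : ∀ j : ℤ,
      {p : ℝ × ℝ | ∀ k ∈ Finset.range N, dot (m (k : ℤ)) p ≤ dot (m j) p}
        = {p : ℝ × ℝ | dot (m (j - 1)) p ≤ dot (m j) p ∧
            dot (m (j + 1)) p ≤ dot (m j) p})
    (a b c θ r : ℤ → ℝ) (n : ℤ → ℝ × ℝ)
    (ha : ∀ j, a j = η j * cos (ψ j) - η (j - 1) * cos (ψ (j - 1)))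
    (hb : ∀ j, b j = η j * sin (ψ j) - η (j - 1) * sin (ψ (j - 1)))
    (hc : ∀ j, cos (c j) = a j / Real.sqrt (a j ^ 2 + b j ^ 2) ∧
      sin (c j) = b j / Real.sqrt (a j ^ 2 + b j ^ 2))
    (hθ : ∀ j, θ j = c j + π / 2)
    (hr : ∀ j, r j = (η j * cos (θ j - ψ j))⁻¹)
    (hn : ∀ j, n j = (r j * cos (θ j), r j * sin (θ j))) :
    {p : ℝ × ℝ | ∀ q : ℝ × ℝ, q.1 ^ 2 + q.2 ^ 2 = 1 → dot p q ≤ γpol q}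
      = {p : ℝ × ℝ | ∀ j ∈ Finset.range N, dot (n (j : ℤ)) p ≤ 1} := by
  have hmpolar : ∀ j, m j = polar (η j) (ψ j) := hm
  have hper : Function.Periodic m N := fun j => by
    rw [hm, hm, hηper, hψper, cos_add_two_pi, sin_add_two_pi]
  have hturn : ∀ j, 0 < cross (m (j - 1)) (m j) := fun j => by
    have hψ := hψmono (j - 1)
    have hψ' := hψgap (j - 1)
    rw [sub_add_cancel] at hψ hψ'
    rw [hmpolar, hmpolar, cross_polar_polar]
    exact mul_pos (mul_pos (hηpos _) (hηpos _)) (sin_pos_of_pos_of_lt_pi (by linarith)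
      (by linarith))
  have hvertex : n = fun j => vertex (m (j - 1)) (m j) := funext fun j => by
    have hedge : m j - m (j - 1) = (a j, b j) := by
      rw [hm, hm, ha, hb, Prod.mk_sub_mk]
    rw [hn, ← polar]
    exact polar_eq_vertex (hedge ▸ hc j) (hθ j) (by rw [hr, hmpolar, dot_polar_polar, mul_one])
  have hγ : γpol = fun q => (Finset.range N).sup'
      (Finset.nonempty_range_iff.mpr (by omega)) (fun j => dot (m (j : ℤ)) q) := funext hγpol
  subst hvertex hγ
  exact frankSet_eq_polygon_of_cross_pos _ hper
    (fun q => by simpa only [hmpolar] using exists_dot_polar_nonneg hηpos hψper hψmono hψgap q)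
    hγ3a hturn
end

section
/- Let n_0 = (3, 0), n_1 = (1, 1), n_2 = (0, 2), n_3 = (−1, −1) in ℝ². Then the set P_1 := {p ∈ ℝ² : n_1·p ≥ n_k·p for k = 0, 2, 3} equals {(0, 0)}; in particular there is no p ∈ ℝ² with n_1·p > n_k·p for all k ≠ 1, so the maximality region of n_1 for the function p ↦ max_{0 ≤ j ≤ 3} n_j·p has empty interior. -/
/-- For `n₀ = (3,0)`, `n₁ = (1,1)`, `n₂ = (0,2)`, `n₃ = (-1,-1)` the maximality
region `P₁` of `n₁` is the single point `{(0,0)}`; in particular there is no `p`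
with `n₁ · p > n_k · p` for all `k ≠ 1`, so assumption (γ3) is not automatic. -/
theorem maximality_region_can_degenerate
    (n : Fin 4 → ℝ × ℝ)
    (hn0 : n 0 = (3, 0)) (hn1 : n 1 = (1, 1)) (hn2 : n 2 = (0, 2))
    (hn3 : n 3 = (-1, -1)) :
    {p : ℝ × ℝ | ∀ k : Fin 4, dot (n k) p ≤ dot (n 1) p} = {((0 : ℝ), (0 : ℝ))} ∧
      ¬ ∃ p : ℝ × ℝ, ∀ k : Fin 4, k ≠ 1 → dot (n k) p < dot (n 1) p := by
  have hset : {p : ℝ × ℝ | ∀ k : Fin 4, dot (n k) p ≤ dot (n 1) p} = {((0 : ℝ), (0 : ℝ))} := by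
    ext ⟨x, y⟩
    simp only [Set.mem_setOf_eq, Set.mem_singleton_iff, Prod.mk.injEq]
    constructor
    · intro h
      have h0 := h 0
      have h2 := h 2
      have h3 := h 3
      rw [hn0, hn1] at h0
      have h2' := h 2; rw [hn2, hn1] at h2'
      have h3' := h 3; rw [hn3, hn1] at h3'
      simp only [dot] at h0 h2' h3'
      constructor <;> nlinarith
    · rintro ⟨rfl, rfl⟩
      intro k
      simp [dot]
  refine ⟨hset, ?_⟩
  rintro ⟨p, hp⟩
  have hmem : p ∈ {p : ℝ × ℝ | ∀ k : Fin 4, dot (n k) p ≤ dot (n 1) p} := by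
    intro k
    by_cases hk : k = 1
    · subst hk; exact le_refl _
    · exact le_of_lt (hp k hk)
  rw [hset] at hmem
  have := hp 0 (by decide)
  rw [hmem] at this
  rw [hn0, hn1] at this
  simp [dot] at this
end

section
/- Let m_j = (cos(2πj/3), sin(2πj/3)) and n_j = 2(cos((2j+1)π/3), sin((2j+1)π/3)) for j = 0, 1, 2. Then for every p ∈ ℝ², the value max_{j=0,1,2} n_j·p is the greatest element of the set {p·q : q ∈ ℝ², max_{j=0,1,2} m_j·q ≤ 1}; that is, the polar of γ°(p) = max_j m_j·p is γ(p) = max_j n_j·p. -/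
/-- The crystalline energy density of the triangle spiral: for
`m_j = (cos(2πj/3), sin(2πj/3))` and `n_j = 2(cos((2j+1)π/3), sin((2j+1)π/3))`,
the polar of `γ°(p) = max_j m_j · p` is `γ(p) = max_j n_j · p`; i.e. for every
`p` the value `max_j n_j · p` is the greatest element of
`{p · q : max_j m_j · q ≤ 1}`. -/
theorem triangle_density_polar
    (m n : Fin 3 → ℝ × ℝ)
    (hm : ∀ j : Fin 3, m j =
      (Real.cos (2 * Real.pi * (j : ℕ) / 3), Real.sin (2 * Real.pi * (j : ℕ) / 3)))
    (hn : ∀ j : Fin 3, n j =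
      (2 * Real.cos ((2 * (j : ℕ) + 1) * Real.pi / 3),
       2 * Real.sin ((2 * (j : ℕ) + 1) * Real.pi / 3)))
    (p : ℝ × ℝ) :
    IsGreatest
      {r : ℝ | ∃ q : ℝ × ℝ, max (dot (m 0) q) (max (dot (m 1) q) (dot (m 2) q)) ≤ 1 ∧
        dot p q = r}
      (max (dot (n 0) p) (max (dot (n 1) p) (dot (n 2) p))) := by
  set t : ℝ := Real.sqrt 3 with htdef
  have ht : t * t = 3 := Real.mul_self_sqrt (by norm_num)
  have hm0 : m 0 = (1, 0) := by
    rw [hm 0]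
    have h : 2 * Real.pi * (((0:Fin 3):ℕ):ℝ) / 3 = 0 := by norm_num
    rw [h, Real.cos_zero, Real.sin_zero]
  have hm1 : m 1 = (-(1/2), t/2) := by
    rw [hm 1]
    have h : 2 * Real.pi * (((1:Fin 3):ℕ):ℝ) / 3 = Real.pi - Real.pi/3 := by
      norm_num; ring
    rw [h, Real.cos_pi_sub, Real.sin_pi_sub, Real.cos_pi_div_three, Real.sin_pi_div_three]
  have hm2 : m 2 = (-(1/2), -(t/2)) := by
    rw [hm 2]
    have h : 2 * Real.pi * (((2:Fin 3):ℕ):ℝ) / 3 = Real.pi - (-(Real.pi/3)) := by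
      norm_num; ring
    rw [h, Real.cos_pi_sub, Real.sin_pi_sub, Real.cos_neg, Real.sin_neg,
      Real.cos_pi_div_three, Real.sin_pi_div_three]
  have hn0 : n 0 = (1, t) := by
    rw [hn 0]
    have h : (2 * (((0:Fin 3):ℕ):ℝ) + 1) * Real.pi / 3 = Real.pi/3 := by norm_num
    rw [h, Real.cos_pi_div_three, Real.sin_pi_div_three, htdef]
    norm_num
    ring
  have hn1 : n 1 = (-2, 0) := by
    rw [hn 1]
    have h : (2 * (((1:Fin 3):ℕ):ℝ) + 1) * Real.pi / 3 = Real.pi := by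
      norm_num
    rw [h, Real.cos_pi, Real.sin_pi]
    norm_num
  have hn2 : n 2 = (1, -t) := by
    rw [hn 2]
    have h : (2 * (((2:Fin 3):ℕ):ℝ) + 1) * Real.pi / 3 = Real.pi - (-(2*Real.pi/3)) := by
      norm_num; ring
    have h2 : Real.cos (2*Real.pi/3) = -(1/2) := by
      rw [show (2*Real.pi/3 : ℝ) = Real.pi - Real.pi/3 by ring, Real.cos_pi_sub,
        Real.cos_pi_div_three]
    have h3 : Real.sin (2*Real.pi/3) = t/2 := by
      rw [show (2*Real.pi/3 : ℝ) = Real.pi - Real.pi/3 by ring, Real.sin_pi_sub,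
        Real.sin_pi_div_three]
    rw [h, Real.cos_pi_sub, Real.sin_pi_sub, Real.cos_neg, Real.sin_neg, h2, h3]
    norm_num
    ring
  -- feasibility of the three vertices
  have feas : ∀ v : ℝ × ℝ, v = (1, t) ∨ v = (-2, 0) ∨ v = (1, -t) →
      max (dot (m 0) v) (max (dot (m 1) v) (dot (m 2) v)) ≤ 1 := by
    intro v hv
    rcases hv with rfl | rfl | rfl <;>
      simp only [dot, hm0, hm1, hm2] <;>
      refine max_le (by nlinarith) (max_le (by nlinarith) (by nlinarith))
  constructor
  · rcases max_choice (dot (n 0) p) (max (dot (n 1) p) (dot (n 2) p)) with h | h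
    · exact ⟨n 0, feas _ (by rw [hn0]; left; rfl), by rw [h]; simp only [dot]; ring⟩
    · rcases max_choice (dot (n 1) p) (dot (n 2) p) with h' | h'
      · exact ⟨n 1, feas _ (by rw [hn1]; right; left; rfl),
          by rw [h, h']; simp only [dot]; ring⟩
      · exact ⟨n 2, feas _ (by rw [hn2]; right; right; rfl),
          by rw [h, h']; simp only [dot]; ring⟩
  · rintro r ⟨q, hq, rfl⟩
    have h0 : dot (m 0) q ≤ 1 := le_trans (le_max_left _ _) hq
    have h1 : dot (m 1) q ≤ 1 :=
      le_trans (le_trans (le_max_left _ _) (le_max_right _ _)) hq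
    have h2 : dot (m 2) q ≤ 1 :=
      le_trans (le_trans (le_max_right _ _) (le_max_right _ _)) hq
    simp only [dot, hm0, hm1, hm2] at h0 h1 h2
    set M := max (dot (n 0) p) (max (dot (n 1) p) (dot (n 2) p)) with hMdef
    have hM0 : p.1 + t * p.2 ≤ M := by
      have h' : dot (n 0) p ≤ M := le_max_left _ _
      rw [hn0] at h'; simp only [dot] at h'; linarith
    have hM1 : -2 * p.1 ≤ M := by
      have h' : dot (n 1) p ≤ M := le_trans (le_max_left _ _) (le_max_right _ _)
      rw [hn1] at h'; simp only [dot] at h'; linarith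
    have hM2 : p.1 - t * p.2 ≤ M := by
      have h' : dot (n 2) p ≤ M := le_trans (le_max_right _ _) (le_max_right _ _)
      rw [hn2] at h'; simp only [dot] at h'; linarith
    -- barycentric coordinates
    have l0 : (0:ℝ) ≤ (1 + q.1/2 + t * q.2/2)/3 := by nlinarith
    have l1 : (0:ℝ) ≤ (1 - q.1)/3 := by nlinarith
    have l2 : (0:ℝ) ≤ (1 + q.1/2 - t * q.2/2)/3 := by nlinarith
    have key : dot p q = (1 + q.1/2 + t * q.2/2)/3 * (p.1 + t * p.2)
        + (1 - q.1)/3 * (-2 * p.1) + (1 + q.1/2 - t * q.2/2)/3 * (p.1 - t * p.2) := by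
      simp only [dot]
      linear_combination (-(p.2 * q.2) / 3) * ht
    have e0 := mul_le_mul_of_nonneg_left hM0 l0
    have e1 := mul_le_mul_of_nonneg_left hM1 l1
    have e2 := mul_le_mul_of_nonneg_left hM2 l2
    linarith [e0, e1, e2, key]
end
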